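/- arXiv:2208.08838 — 2 statements merged into one kernel-verified Lean document; each statement's English description precedes it below -/
import Mathlib

section
/- Let A = kQ/I be a finite dimensional algebra and ℓ a bound on the length of nonzero paths in A. Suppose M is a class of indecomposable A-modules such that each M ∈ M has a chosen basis whose coefficient quiver has indegree bounded by d, the class of underlying graphs of these coefficient quivers is fragmentable, and all nonzero paths have length at most ℓ. Then M is a hyperfinite family. -/
/-- A quiver: vertices, arrows, source and target maps. -/
structure QuiverData where
  Q0 : Type
  Q1 : Type
  src : Q1 → Q0
  tgt : Q1 → Q0

/-- A `k`-linear representation of the quiver `Q`. -/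
structure RepOf (k : Type) [Field k] (Q : QuiverData) where
  V : Q.Q0 → Type
  [acg : ∀ q, AddCommGroup (V q)]
  [mod : ∀ q, Module k (V q)]
  f : ∀ a : Q.Q1, V (Q.src a) →ₗ[k] V (Q.tgt a)

attribute [instance] RepOf.acg RepOf.mod

/-- A subrepresentation: a family of subspaces invariant under all arrow maps. -/
structure SubRep {k : Type} [Field k] {Q : QuiverData} (M : RepOf k Q) where
  U : ∀ q, Submodule k (M.V q)
  inv : ∀ a : Q.Q1, (U (Q.src a)).map (M.f a) ≤ U (Q.tgt a)

/-- A representation is indecomposable if it is nonzero and admits no decomposition into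
two componentwise complementary nonzero subrepresentations. -/
def IsIndec {k : Type} [Field k] {Q : QuiverData} (M : RepOf k Q) : Prop :=
  (∃ q, ∃ x : M.V q, x ≠ 0) ∧
  ∀ U W : SubRep M, (∀ q, IsCompl (U.U q) (W.U q)) →
    (∀ q, U.U q = ⊥) ∨ (∀ q, W.U q = ⊥)

/-- There is an arrow `a` whose matrix entry at `(x, y)` with respect to the basis `B`
is nonzero (an arrow `x → y` in the coefficient quiver). -/
def coeffRelA {k : Type} [Field k] {Q : QuiverData} (M : RepOf k Q) {ι : Q.Q0 → Type}
    (B : ∀ q, Module.Basis (ι q) k (M.V q)) (a : Q.Q1) (x y : Σ q, ι q) : Prop :=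
  ∃ (hx : x.1 = Q.src a) (hy : y.1 = Q.tgt a),
    ((B (Q.tgt a)).repr ((M.f a) ((B (Q.src a)) (hx ▸ x.2)))) (hy ▸ y.2) ≠ 0

/-- There is an arrow `x → y` in the coefficient quiver `Γ(M, B)`. -/
def coeffRel {k : Type} [Field k] {Q : QuiverData} (M : RepOf k Q) {ι : Q.Q0 → Type}
    (B : ∀ q, Module.Basis (ι q) k (M.V q)) (x y : Σ q, ι q) : Prop :=
  ∃ a : Q.Q1, coeffRelA M B a x y

/-- The underlying (simple) graph of the coefficient quiver `Γ(M, B)`. -/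
def coeffGraph {k : Type} [Field k] {Q : QuiverData} (M : RepOf k Q) {ι : Q.Q0 → Type}
    (B : ∀ q, Module.Basis (ι q) k (M.V q)) : SimpleGraph (Σ q, ι q) where
  Adj x y := x ≠ y ∧ (coeffRel M B x y ∨ coeffRel M B y x)
  symm := ⟨by rintro x y ⟨h1, h2⟩; exact ⟨h1.symm, h2.symm⟩⟩
  loopless := ⟨fun x h => h.1 rfl⟩

/-- The total `k`-dimension of a representation. -/
noncomputable def totalDim {k : Type} [Field k] {Q : QuiverData} [Fintype Q.Q0]
    (M : RepOf k Q) : ℕ :=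
  ∑ q, Module.finrank k (M.V q)

/-- The total `k`-dimension of a subrepresentation. -/
noncomputable def subDim {k : Type} [Field k] {Q : QuiverData} [Fintype Q.Q0]
    {M : RepOf k Q} (N : SubRep M) : ℕ :=
  ∑ q, Module.finrank k (N.U q)

/-- The number of non-isolated vertices of a graph. -/
noncomputable def nonIsolated {α : Type} (G : SimpleGraph α) : ℕ :=
  {v : α | ∃ w, G.Adj v w}.ncard

/-!
Remove the small separator `X` given by fragmentability together with every basis vector from
which a path of the coefficient quiver leads into `X`. Since paths have length at most `ℓ` and
indegrees are at most `d`, this removes at most `(1 + d + ⋯ + d^ℓ)|X|` basis vectors. What is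
left is closed under the arrows of the coefficient quiver, so it spans a subrepresentation, and
so does each connected component of what is left. These components lie inside components of
`Γ \ X`, hence have bounded size, and their spans decompose the subrepresentation.
Indecomposability rules out isolated vertices of `Γ` once `dim M > 1` (an isolated basis vector
would span a direct summand), so the number of non-isolated vertices is `dim M`.
-/

open Set SimpleGraph Function

section SuccClosed

variable {V : Type} (r : V → V → Prop)

def IsSuccClosed (S : Set V) : Prop :=
  ∀ x ∈ S, ∀ y, r x y → y ∈ S

theorem IsSuccClosed.iUnion {J : Type} {T : J → Set V} (hT : ∀ j, IsSuccClosed r (T j)) :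
    IsSuccClosed r (⋃ j, T j) := by
  simp only [IsSuccClosed, mem_iUnion]
  rintro x ⟨j, hx⟩ y hxy
  exact ⟨j, hT j x hx y hxy⟩

def walkInto (X : Set V) : ℕ → Set V
  | 0 => X
  | j + 1 => {x | ∃ y ∈ walkInto X j, r x y}

theorem exists_walk_of_mem_walkInto {X : Set V} :
    ∀ j, ∀ v ∈ walkInto r X j, ∃ w : Fin (j + 1) → V,
      w 0 = v ∧ (∀ m : Fin j, r (w m.castSucc) (w m.succ)) ∧ w (Fin.last j) ∈ X
  | 0, v, hv => ⟨fun _ => v, rfl, fun m => m.elim0, hv⟩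
  | j + 1, v, ⟨y, hy, hvy⟩ => by
    obtain ⟨w, rfl, hw, hlast⟩ := exists_walk_of_mem_walkInto j y hy
    refine ⟨Fin.cons v w, rfl, Fin.cases hvy fun m => ?_, by simpa [← Fin.succ_last]⟩
    simpa [← Fin.succ_castSucc] using hw m

variable {r}

theorem walkInto_eq_empty {ℓ : ℕ}
    (hpath : ∀ x : Fin (ℓ + 2) → V, ¬ ∀ j : Fin (ℓ + 1), r (x j.castSucc) (x j.succ))
    (X : Set V) {j : ℕ} (hj : ℓ < j) : walkInto r X j = ∅ := by
  induction j, hj using Nat.le_induction with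
  | base =>
    refine eq_empty_of_forall_notMem fun v hv => ?_
    obtain ⟨w, -, hw, -⟩ := exists_walk_of_mem_walkInto r _ v hv
    exact hpath w hw
  | succ j _ ih => simp [walkInto, ih]

theorem ncard_walkInto_le [Finite V] {d : ℕ} (hd : ∀ y, {x | r x y}.ncard ≤ d) (X : Set V) :
    ∀ j, (walkInto r X j).ncard ≤ d ^ j * X.ncard
  | 0 => by simp [walkInto]
  | j + 1 => by
    have hpred :
        walkInto r X (j + 1) = ⋃ y ∈ (toFinite (walkInto r X j)).toFinset, {x | r x y} := by
      ext x
      simp [walkInto]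
    calc (walkInto r X (j + 1)).ncard
        ≤ ∑ y ∈ (toFinite (walkInto r X j)).toFinset, {x | r x y}.ncard :=
          hpred ▸ Finset.set_ncard_biUnion_le _ _
      _ ≤ (walkInto r X j).ncard * d := by
          rw [ncard_eq_toFinset_card _ (toFinite _)]
          exact Finset.sum_le_card_nsmul _ _ _ fun y _ => hd y
      _ ≤ d ^ (j + 1) * X.ncard := by
          rw [pow_succ]
          nlinarith [ncard_walkInto_le hd X j]

theorem isSuccClosed_compl_iUnion_walkInto (X : Set V) :
    IsSuccClosed r (⋃ j, walkInto r X j)ᶜ := by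
  simp only [IsSuccClosed, mem_compl_iff, mem_iUnion, not_exists]
  intro x hx y hxy j hy
  exact hx (j + 1) ⟨y, hy, hxy⟩

theorem ncard_iUnion_walkInto_le [Finite V] {d ℓ : ℕ} (hd : ∀ y, {x | r x y}.ncard ≤ d)
    (hpath : ∀ x : Fin (ℓ + 2) → V, ¬ ∀ j : Fin (ℓ + 1), r (x j.castSucc) (x j.succ))
    (X : Set V) :
    (⋃ j, walkInto r X j).ncard ≤ (∑ j ∈ Finset.range (ℓ + 1), d ^ j) * X.ncard := by
  have htrunc : (⋃ j, walkInto r X j) = ⋃ j ∈ Finset.range (ℓ + 1), walkInto r X j := by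
    refine Subset.antisymm (iUnion_subset fun j => ?_)
      (iUnion₂_subset fun j _ => subset_iUnion _ j)
    rcases lt_or_ge ℓ j with hj | hj
    · simp [walkInto_eq_empty hpath X hj]
    · exact subset_biUnion_of_mem (u := fun j => walkInto r X j) (by simp; omega)
  rw [htrunc, Finset.sum_mul]
  exact (Finset.set_ncard_biUnion_le _ _).trans
    (Finset.sum_le_sum fun j _ => ncard_walkInto_le hd X j)

theorem IsSuccClosed.image_supp {S : Set V} (hS : IsSuccClosed r S)
    (c : ((fromRel r).induce S).ConnectedComponent) :
    IsSuccClosed r (Subtype.val '' c.supp) := by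
  rintro _ ⟨x, hx, rfl⟩ y hxy
  by_cases hyx : y = x
  · exact ⟨x, hx, hyx.symm⟩
  refine ⟨⟨y, hS x x.2 y hxy⟩, ?_, rfl⟩
  rw [ConnectedComponent.mem_supp_iff] at hx ⊢
  rw [← hx]
  exact ConnectedComponent.connectedComponentMk_eq_of_adj
    ((fromRel_adj r y x).mpr ⟨hyx, Or.inr hxy⟩)

end SuccClosed

theorem SimpleGraph.ncard_supp_induce_le_of_subset {V : Type} [Finite V] {G : SimpleGraph V}
    {S T : Set V} (hST : S ⊆ T) {C : ℕ}
    (hT : ∀ c : (G.induce T).ConnectedComponent, c.supp.ncard ≤ C)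
    (c : (G.induce S).ConnectedComponent) : c.supp.ncard ≤ C := by
  let φ := G.induceHomOfLE hST
  have hmaps : φ '' c.supp ⊆ (c.map φ.toHom).supp := by
    rintro _ ⟨v, hv, rfl⟩
    rw [ConnectedComponent.mem_supp_iff] at hv ⊢
    rw [← hv, ConnectedComponent.map_mk]
    rfl
  calc c.supp.ncard = (φ '' c.supp).ncard := (ncard_image_of_injective _ φ.injective).symm
    _ ≤ (c.map φ.toHom).supp.ncard := ncard_le_ncard hmaps (toFinite _)
    _ ≤ C := hT _

theorem exists_succClosed_partition_of_fragment {V : Type} [Finite V] {r : V → V → Prop}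
    {d ℓ C : ℕ} (hd : ∀ y, {x | r x y}.ncard ≤ d)
    (hpath : ∀ x : Fin (ℓ + 2) → V, ¬ ∀ j : Fin (ℓ + 1), r (x j.castSucc) (x j.succ))
    {X : Set V} (hX : ∀ c : ((fromRel r).induce Xᶜ).ConnectedComponent, c.supp.ncard ≤ C) :
    ∃ (J : Type) (_ : Finite J) (T : J → Set V), (∀ j, IsSuccClosed r (T j)) ∧
      Pairwise (Disjoint on T) ∧ (∀ j, (T j).ncard ≤ C) ∧
      Nat.card V ≤ (⋃ j, T j).ncard + (∑ j ∈ Finset.range (ℓ + 1), d ^ j) * X.ncard := by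
  set R := ⋃ j, walkInto r X j
  have hXR : X ⊆ R := subset_iUnion (walkInto r X) 0
  let T (c : ((fromRel r).induce Rᶜ).ConnectedComponent) : Set V := Subtype.val '' c.supp
  have hunion : ⋃ c, T c = Rᶜ := by
    rw [← image_iUnion, iUnion_connectedComponentSupp, image_univ, Subtype.range_coe]
  refine ⟨_, inferInstance, T, (isSuccClosed_compl_iUnion_walkInto X).image_supp,
    fun c c' hcc' => (disjoint_image_iff Subtype.val_injective).mpr
      (pairwise_disjoint_supp_connectedComponent _ hcc'),
    fun c => ?_, ?_⟩
  · rw [ncard_image_of_injective _ Subtype.val_injective]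
    exact ncard_supp_induce_le_of_subset (compl_subset_compl.mpr hXR) hX c
  · rw [hunion, ← ncard_add_ncard_compl R, add_comm]
    exact Nat.add_le_add_left (ncard_iUnion_walkInto_le hd hpath X) _

theorem Module.Basis.finrank_span_image {k W ι : Type} [Field k] [AddCommGroup W] [Module k W]
    (B : Module.Basis ι k W) {s : Set ι} (hs : s.Finite) :
    Module.finrank k (Submodule.span k (B '' s)) = s.ncard := by
  have := hs.fintype
  rw [image_eq_range]
  exact (finrank_span_eq_card (B.linearIndependent.comp _ Subtype.val_injective)).trans
    (Nat.card_eq_fintype_card.symm.trans (Nat.card_coe_set_eq s))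

theorem Module.Basis.iSupIndep_span_image {k W ι J : Type} [Field k] [AddCommGroup W]
    [Module k W] (B : Module.Basis ι k W) {s : J → Set ι} (hs : Pairwise (Disjoint on s)) :
    iSupIndep fun j => Submodule.span k (B '' s j) := by
  refine iSupIndep_def.mpr fun j => ?_
  simp only [← Submodule.span_iUnion, ← image_iUnion]
  exact B.linearIndependent.disjoint_span_image
    (disjoint_iUnion₂_right.mpr fun j' hj' => hs (Ne.symm hj'))

theorem sum_ncard_preimage_sigmaMk {ι : Type} [Fintype ι] {κ : ι → Type}
    [∀ q, Finite (κ q)] (S : Set (Σ q, κ q)) :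
    ∑ q, (Sigma.mk q ⁻¹' S).ncard = S.ncard := by
  classical
  have := fun q => Fintype.ofFinite (κ q)
  simp_rw [ncard_eq_toFinset_card']
  rw [← Finset.card_sigma]
  congr 1
  ext ⟨q, b⟩
  simp

section Representations

variable {k : Type} [Field k] {Q : QuiverData} {M : RepOf k Q} {ι : Q.Q0 → Type}

def SubRep.spanBasis (B : ∀ q, Module.Basis (ι q) k (M.V q)) (S : Set (Σ q, ι q))
    (hS : IsSuccClosed (coeffRel M B) S) : SubRep M where
  U q := Submodule.span k (B q '' (Sigma.mk q ⁻¹' S))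
  inv a := by
    rw [Submodule.map_span, Submodule.span_le]
    rintro _ ⟨_, ⟨b, hb, rfl⟩, rfl⟩
    refine Submodule.span_mono (image_mono fun c hc => hS _ hb ⟨_, c⟩ ?_)
      ((B (Q.tgt a)).mem_span_repr_support _)
    exact ⟨a, rfl, rfl, by simpa using hc⟩

theorem SubRep.subDim_spanBasis [Fintype Q.Q0] [∀ q, Finite (ι q)]
    (B : ∀ q, Module.Basis (ι q) k (M.V q)) (S : Set (Σ q, ι q))
    (hS : IsSuccClosed (coeffRel M B) S) : subDim (SubRep.spanBasis B S hS) = S.ncard := by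
  rw [← sum_ncard_preimage_sigmaMk S]
  exact Finset.sum_congr rfl fun q _ => (B q).finrank_span_image (toFinite _)

theorem SubRep.eq_empty_of_spanBasis_eq_bot (B : ∀ q, Module.Basis (ι q) k (M.V q))
    {S : Set (Σ q, ι q)} (hS : IsSuccClosed (coeffRel M B) S)
    (hbot : ∀ q, (SubRep.spanBasis B S hS).U q = ⊥) : S = ∅ := by
  refine eq_empty_of_forall_notMem fun x hx => (B x.1).ne_zero x.2 ?_
  rw [← Submodule.mem_bot k, ← hbot x.1]
  exact Submodule.subset_span (mem_image_of_mem _ hx)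

theorem IsIndec.eq_empty_or_eq_univ_of_isSuccClosed (hM : IsIndec M)
    (B : ∀ q, Module.Basis (ι q) k (M.V q)) {S : Set (Σ q, ι q)}
    (hS : IsSuccClosed (coeffRel M B) S) (hSc : IsSuccClosed (coeffRel M B) Sᶜ) :
    S = ∅ ∨ S = univ := by
  have hcompl (q : Q.Q0) :
      IsCompl ((SubRep.spanBasis B S hS).U q) ((SubRep.spanBasis B Sᶜ hSc).U q) :=
    (B q).linearIndependent.isCompl_span_image (B q).span_eq isCompl_compl
  rcases hM.2 _ _ hcompl with h | h
  · exact Or.inl (SubRep.eq_empty_of_spanBasis_eq_bot B hS h)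
  · exact Or.inr (compl_empty_iff.mp (SubRep.eq_empty_of_spanBasis_eq_bot B hSc h))

theorem IsIndec.nonIsolated_coeffGraph [Finite (Σ q, ι q)] (hM : IsIndec M)
    (B : ∀ q, Module.Basis (ι q) k (M.V q)) (hcard : 1 < Nat.card (Σ q, ι q)) :
    nonIsolated (coeffGraph M B) = Nat.card (Σ q, ι q) := by
  suffices h : ∀ v, ∃ w, (coeffGraph M B).Adj v w by
    rw [nonIsolated, ← ncard_univ]
    exact congrArg ncard (eq_univ_of_forall h)
  intro v
  by_contra! hv
  have hsingle : IsSuccClosed (coeffRel M B) {v} := by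
    rintro _ rfl y hvy
    by_contra hyv
    exact hv y ⟨Ne.symm hyv, Or.inl hvy⟩
  have hcompl : IsSuccClosed (coeffRel M B) {v}ᶜ := by
    rintro x hxv y hxy rfl
    exact hv x ⟨Ne.symm hxv, Or.inr hxy⟩
  rcases hM.eq_empty_or_eq_univ_of_isSuccClosed B hsingle hcompl with h | h
  · exact singleton_ne_empty v h
  · rw [← ncard_univ, ← h, ncard_singleton] at hcard
    exact lt_irrefl 1 hcard

theorem ncard_setOf_coeffRel_le [Finite Q.Q1] [Finite (Σ q, ι q)]
    (B : ∀ q, Module.Basis (ι q) k (M.V q)) {y : Σ q, ι q} {d : ℕ}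
    (hd : {p : Q.Q1 × (Σ q, ι q) | coeffRelA M B p.1 p.2 y}.ncard ≤ d) :
    {x | coeffRel M B x y}.ncard ≤ d := by
  have himage : {x | coeffRel M B x y} = Prod.snd '' {p | coeffRelA M B p.1 p.2 y} := by
    ext x
    simp [coeffRel]
  exact himage ▸ (ncard_image_le (toFinite _)).trans hd

theorem totalDim_eq_card [Fintype Q.Q0] [∀ q, Fintype (ι q)]
    (B : ∀ q, Module.Basis (ι q) k (M.V q)) : totalDim M = Nat.card (Σ q, ι q) := by
  rw [Nat.card_sigma]
  exact Finset.sum_congr rfl fun q _ => (Module.finrank_eq_card_basis (B q)).trans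
    Nat.card_eq_fintype_card.symm

def SubRep.IsDirectSumOfDimLE [Fintype Q.Q0] (N : SubRep M) (L : ℕ) : Prop :=
  ∃ (t : ℕ) (P : Fin t → SubRep M),
    (∀ j q, (P j).U q ≤ N.U q) ∧
    (∀ q, (⨆ j, (P j).U q) = N.U q) ∧
    (∀ q, iSupIndep fun j => (P j).U q) ∧
    ∀ j, subDim (P j) ≤ L

theorem SubRep.isDirectSumOfDimLE_spanBasis [Fintype Q.Q0] [∀ q, Finite (ι q)]
    (B : ∀ q, Module.Basis (ι q) k (M.V q)) {J : Type} [Finite J] {T : J → Set (Σ q, ι q)}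
    (hT : ∀ j, IsSuccClosed (coeffRel M B) (T j)) (hdisj : Pairwise (Disjoint on T)) {L : ℕ}
    (hL : ∀ j, (T j).ncard ≤ L) :
    (SubRep.spanBasis B (⋃ j, T j) (IsSuccClosed.iUnion _ hT)).IsDirectSumOfDimLE L := by
  obtain ⟨t, ⟨e⟩⟩ := Finite.exists_equiv_fin J
  refine ⟨t, fun j => SubRep.spanBasis B (T (e.symm j)) (hT _), fun j q => ?_, fun q => ?_,
    fun q => ?_, fun j => ?_⟩
  · exact Submodule.span_mono (image_mono (preimage_mono (subset_iUnion T _)))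
  · simp only [SubRep.spanBasis, ← Submodule.span_iUnion, ← image_iUnion, preimage_iUnion]
    rw [e.symm.surjective.iUnion_comp fun j => Sigma.mk q ⁻¹' T j]
  · exact ((B q).iSupIndep_span_image fun j j' hjj' =>
      (hdisj hjj').preimage (Sigma.mk q)).comp e.symm.injective
  · exact (SubRep.subDim_spanBasis B _ _).trans_le (hL _)

theorem IsIndec.exists_isDirectSumOfDimLE [Fintype Q.Q0] [Finite Q.Q1] [∀ q, Fintype (ι q)]
    (hM : IsIndec M) (B : ∀ q, Module.Basis (ι q) k (M.V q)) {d ℓ n₀ C : ℕ} {δ : ℝ}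
    (hdeg : ∀ y, {p : Q.Q1 × (Σ q, ι q) | coeffRelA M B p.1 p.2 y}.ncard ≤ d)
    (hpath : ∀ x : Fin (ℓ + 2) → Σ q, ι q,
      ¬ ∀ j : Fin (ℓ + 1), coeffRel M B (x j.castSucc) (x j.succ))
    (hfrag : n₀ ≤ nonIsolated (coeffGraph M B) → ∃ X : Set (Σ q, ι q),
      (X.ncard : ℝ) ≤ δ * nonIsolated (coeffGraph M B) ∧
      ∀ c : ((coeffGraph M B).induce Xᶜ).ConnectedComponent, c.supp.ncard ≤ C)
    (hδ : 0 ≤ δ) :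
    ∃ N : SubRep M,
      (1 - (∑ j ∈ Finset.range (ℓ + 1), d ^ j) * δ) * (totalDim M : ℝ) ≤ subDim N ∧
      N.IsDirectSumOfDimLE (max (max C n₀) 1) := by
  set D := ∑ j ∈ Finset.range (ℓ + 1), d ^ j
  rw [totalDim_eq_card B]
  suffices ∃ (J : Type) (_ : Finite J) (T : J → Set (Σ q, ι q)),
      (∀ j, IsSuccClosed (coeffRel M B) (T j)) ∧ Pairwise (Disjoint on T) ∧
      (∀ j, (T j).ncard ≤ max (max C n₀) 1) ∧
      (1 - D * δ) * (Nat.card (Σ q, ι q) : ℝ) ≤ (⋃ j, T j).ncard by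
    obtain ⟨J, _, T, hT, hdisj, hTL, hdim⟩ := this
    exact ⟨_, by rwa [SubRep.subDim_spanBasis],
      SubRep.isDirectSumOfDimLE_spanBasis B hT hdisj hTL⟩
  by_cases hsmall : Nat.card (Σ q, ι q) ≤ max (max C n₀) 1
  · refine ⟨Unit, inferInstance, fun _ => univ, fun _ _ _ _ _ => mem_univ _,
      Subsingleton.pairwise, fun _ => by rwa [ncard_univ], ?_⟩
    rw [iUnion_const, ncard_univ]
    nlinarith [mul_nonneg (Nat.cast_nonneg D : (0 : ℝ) ≤ D) hδ]
  have hn := hM.nonIsolated_coeffGraph B (by omega)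
  obtain ⟨X, hX, hcomp⟩ := hfrag (by omega)
  obtain ⟨J, _, T, hT, hdisj, hTC, hcover⟩ := exists_succClosed_partition_of_fragment
    (fun y => ncard_setOf_coeffRel_le B (hdeg y)) hpath hcomp
  refine ⟨J, inferInstance, T, hT, hdisj, fun j => (hTC j).trans (by omega), ?_⟩
  rw [hn] at hX
  have hcover' : (Nat.card (Σ q, ι q) : ℝ) ≤ (⋃ j, T j).ncard + D * X.ncard := by
    exact_mod_cast hcover
  nlinarith [mul_le_mul_of_nonneg_left hX (Nat.cast_nonneg D : (0 : ℝ) ≤ D)]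

end Representations

theorem stmt8_general {k : Type} [Field k] {Q : QuiverData} [Fintype Q.Q0] [Fintype Q.Q1]
    {I : Type} (Ms : I → RepOf k Q)
    {κ : I → Q.Q0 → Type} [∀ i q, Fintype (κ i q)]
    (Bs : ∀ i q, Module.Basis (κ i q) k ((Ms i).V q))
    (d ℓ : ℕ)
    (hindec : ∀ i, IsIndec (Ms i))
    (hdeg : ∀ i (y : Σ q, κ i q),
      {p : Q.Q1 × (Σ q, κ i q) | coeffRelA (Ms i) (Bs i) p.1 p.2 y}.ncard ≤ d)
    (hpath : ∀ i (x : Fin (ℓ + 2) → Σ q, κ i q),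
      ¬ ∀ j : Fin (ℓ + 1), coeffRel (Ms i) (Bs i) (x j.castSucc) (x j.succ))
    (hfrag : ∀ ε : ℝ, 0 < ε → ∃ n₀ C : ℕ, ∀ i,
      n₀ ≤ nonIsolated (coeffGraph (Ms i) (Bs i)) →
      ∃ X : Set (Σ q, κ i q),
        (X.ncard : ℝ) ≤ ε * (nonIsolated (coeffGraph (Ms i) (Bs i)) : ℝ) ∧
        ∀ c : ((coeffGraph (Ms i) (Bs i)).induce Xᶜ).ConnectedComponent,
          c.supp.ncard ≤ C) :
    ∀ ε : ℝ, 0 < ε → ∃ L : ℕ, 0 < L ∧ ∀ i, ∃ N : SubRep (Ms i),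
      (1 - ε) * (totalDim (Ms i) : ℝ) ≤ (subDim N : ℝ) ∧
      ∃ (t : ℕ) (P : Fin t → SubRep (Ms i)),
        (∀ j q, (P j).U q ≤ N.U q) ∧
        (∀ q, (⨆ j, (P j).U q) = N.U q) ∧
        (∀ q, iSupIndep fun j => (P j).U q) ∧
        ∀ j, subDim (P j) ≤ L := by
  intro ε hε
  have hD : (0 : ℝ) < ∑ j ∈ Finset.range (ℓ + 1), d ^ j :=
    Nat.cast_pos.mpr (Finset.sum_pos' (fun _ _ => Nat.zero_le _) ⟨0, by simp, by simp⟩)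
  obtain ⟨n₀, C, hfrag⟩ := hfrag (ε / _) (div_pos hε hD)
  refine ⟨max (max C n₀) 1, by positivity, fun i => ?_⟩
  obtain ⟨N, hN, hdec⟩ :=
    (hindec i).exists_isDirectSumOfDimLE (Bs i) (hdeg i) (hpath i) (hfrag i) (div_pos hε hD).le
  rw [mul_div_cancel₀ _ hD.ne'] at hN
  exact ⟨N, hN, hdec⟩

/-- Let `A = kQ/I` be finite dimensional and let `(Ms i)` be a class of
indecomposable modules (representations of `Q`), each with a chosen basis `Bs i`, such
that the indegree of every coefficient quiver is bounded by `d`, every directed path in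
the coefficient quivers has length at most `ℓ`, and the class of underlying graphs of
the coefficient quivers is fragmentable. Then the class is a hyperfinite family. -/
theorem stmt8 {k : Type} [Field k] {Q : QuiverData} [Fintype Q.Q0] [Fintype Q.Q1]
    {I : Type} (Ms : I → RepOf k Q) [∀ i q, FiniteDimensional k ((Ms i).V q)]
    {κ : I → Q.Q0 → Type} [∀ i q, Fintype (κ i q)]
    (Bs : ∀ i q, Module.Basis (κ i q) k ((Ms i).V q))
    (d ℓ : ℕ)
    (hindec : ∀ i, IsIndec (Ms i))
    (hdeg : ∀ i (y : Σ q, κ i q),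
      {p : Q.Q1 × (Σ q, κ i q) | coeffRelA (Ms i) (Bs i) p.1 p.2 y}.ncard ≤ d)
    (hpath : ∀ i (x : Fin (ℓ + 2) → Σ q, κ i q),
      ¬ ∀ j : Fin (ℓ + 1), coeffRel (Ms i) (Bs i) (x j.castSucc) (x j.succ))
    (hfrag : ∀ ε : ℝ, 0 < ε → ∃ n₀ C : ℕ, ∀ i,
      n₀ ≤ nonIsolated (coeffGraph (Ms i) (Bs i)) →
      ∃ X : Set (Σ q, κ i q),
        (X.ncard : ℝ) ≤ ε * (nonIsolated (coeffGraph (Ms i) (Bs i)) : ℝ) ∧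
        ∀ c : ((coeffGraph (Ms i) (Bs i)).induce Xᶜ).ConnectedComponent,
          c.supp.ncard ≤ C) :
    ∀ ε : ℝ, 0 < ε → ∃ L : ℕ, 0 < L ∧ ∀ i, ∃ N : SubRep (Ms i),
      (1 - ε) * (totalDim (Ms i) : ℝ) ≤ (subDim N : ℝ) ∧
      ∃ (t : ℕ) (P : Fin t → SubRep (Ms i)),
        (∀ j q, (P j).U q ≤ N.U q) ∧
        (∀ q, (⨆ j, (P j).U q) = N.U q) ∧
        (∀ q, iSupIndep fun j => (P j).U q) ∧
        ∀ j, subDim (P j) ≤ L :=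
  stmt8_general Ms Bs d ℓ hindec hdeg hpath hfrag
end

section
/- Let A be a finite dimensional k-algebra. If the family of indecomposable finite dimensional A-modules is hyperfinite, then the family of all finite dimensional A-modules is hyperfinite, i.e. A is of amenable representation type. -/
/-- A bundled finite (dimensional) module over the `k`-algebra `A`. -/
structure FDMod (k A : Type) [Field k] [Ring A] [Algebra k A] where
  carrier : Type
  [acg : AddCommGroup carrier]
  [mod : Module A carrier]
  [fin : Module.Finite A carrier]

attribute [instance] FDMod.acg FDMod.mod FDMod.fin

/-- The dimension over `k` of an `A`-module (via restriction of scalars). -/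
noncomputable def kdim (k A : Type) [Field k] [Ring A] [Algebra k A]
    (X : Type) [AddCommGroup X] [Module A X] : ℕ :=
  Module.finrank k (RestrictScalars k A X)

/-- A family of `A`-modules is hyperfinite if for every `ε > 0` there is `L_ε > 0` such
that every member `M` has a submodule `N` with `dim N ≥ (1-ε)·dim M` which is the
(internal) direct sum of submodules of `k`-dimension at most `L_ε`. -/
def Hyperfinite (k A : Type) [Field k] [Ring A] [Algebra k A]
    (ℳ : Set (FDMod k A)) : Prop :=
  ∀ ε : ℝ, 0 < ε → ∃ L : ℕ, 0 < L ∧ ∀ M ∈ ℳ,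
    ∃ N : Submodule A M.carrier,
      (1 - ε) * (kdim k A M.carrier : ℝ) ≤ (kdim k A N : ℝ) ∧
      ∃ (t : ℕ) (P : Fin t → Submodule A M.carrier),
        (∀ i, P i ≤ N) ∧ iSup P = N ∧ iSupIndep P ∧
        ∀ i, kdim k A (P i) ≤ L

/-- An `A`-module is indecomposable: it is nonzero and admits no pair of complementary
nonzero submodules. -/
def Indec (k A : Type) [Field k] [Ring A] [Algebra k A] (M : FDMod k A) : Prop :=
  (∃ x : M.carrier, x ≠ 0) ∧
  ∀ U W : Submodule A M.carrier, IsCompl U W → U = ⊥ ∨ W = ⊥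

section Aux

variable {k A : Type} [Field k] [Ring A] [Algebra k A]

/-- identity as a `k`-linear equiv between `RestrictScalars` and a compatible module. -/
def stmt19.rsEquiv (X : Type) [AddCommGroup X] [Module A X] [Module k X]
    [IsScalarTower k A X] : RestrictScalars k A X ≃ₗ[k] X where
  toFun := RestrictScalars.addEquiv k A X
  invFun := (RestrictScalars.addEquiv k A X).symm
  map_add' := map_add _
  map_smul' := fun c x => by
    simp [RestrictScalars.addEquiv_map_smul, algebraMap_smul]
  left_inv := fun _ => rfl
  right_inv := fun _ => rfl

lemma stmt19.kdim_eq (X : Type) [AddCommGroup X] [Module A X] [Module k X]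
    [IsScalarTower k A X] : kdim k A X = Module.finrank k X :=
  LinearEquiv.finrank_eq (stmt19.rsEquiv X)

/-- `kdim` is invariant under `A`-linear equivalences. -/
lemma stmt19.kdim_congr {X Y : Type} [AddCommGroup X] [Module A X] [AddCommGroup Y]
    [Module A Y] (e : X ≃ₗ[A] Y) : kdim k A X = kdim k A Y := by
  refine LinearEquiv.finrank_eq ?_
  exact { toFun := fun x => (RestrictScalars.addEquiv k A Y).symm
            (e (RestrictScalars.addEquiv k A X x))
          invFun := fun y => (RestrictScalars.addEquiv k A X).symm
            (e.symm (RestrictScalars.addEquiv k A Y y))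
          map_add' := fun a b => by simp [map_add]
          map_smul' := fun c x => by
            simp only [RestrictScalars.addEquiv_map_smul, RingHom.id_apply]
            rw [map_smul]
            exact (RestrictScalars.addEquiv_symm_map_algebraMap_smul k A _ _ _)
          left_inv := fun x => by simp
          right_inv := fun y => by simp }

lemma stmt19.kdim_eq_of_eq {V : Type} [AddCommGroup V] [Module A V]
    {X Y : Submodule A V} (h : X = Y) : kdim k A ↥X = kdim k A ↥Y := by subst h; rfl

lemma stmt19.noeth [FiniteDimensional k A] : IsNoetherianRing A :=
  isNoetherianRing_iff.mpr <| isNoetherian_of_tower k inferInstance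

variable {V : Type} [AddCommGroup V] [Module A V] [Module k V] [IsScalarTower k A V]

/-- identity as a `k`-linear equiv between a restricted submodule and the subtype. -/
def stmt19.subRSEquiv (U : Submodule A V) : ↥(U.restrictScalars k) ≃ₗ[k] ↥U where
  toFun := fun x => ⟨x.1, x.2⟩
  invFun := fun x => ⟨x.1, x.2⟩
  map_add' := fun _ _ => rfl
  map_smul' := fun _ _ => rfl
  left_inv := fun _ => rfl
  right_inv := fun _ => rfl

lemma stmt19.kdim_sub (U : Submodule A V) :
    kdim k A ↥U = Module.finrank k ↥(U.restrictScalars k) := by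
  rw [stmt19.kdim_eq]
  exact (stmt19.subRSEquiv U).symm.finrank_eq

lemma stmt19.rs_disjoint {U W : Submodule A V} (h : Disjoint U W) :
    Disjoint (U.restrictScalars k) (W.restrictScalars k) := by
  rw [Submodule.disjoint_def] at h ⊢
  exact h

lemma stmt19.rs_isCompl {U W : Submodule A V} (h : IsCompl U W) :
    IsCompl (U.restrictScalars k) (W.restrictScalars k) := by
  constructor
  · exact stmt19.rs_disjoint h.disjoint
  · rw [codisjoint_iff]
    rw [eq_top_iff]
    intro x _
    have hx : x ∈ U ⊔ W := by rw [codisjoint_iff.mp h.codisjoint]; trivial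
    obtain ⟨u, hu, w, hw, rfl⟩ := Submodule.mem_sup.mp hx
    exact Submodule.add_mem_sup hu hw

variable [FiniteDimensional k V]

lemma stmt19.kdim_pos {U : Submodule A V} (h : U ≠ ⊥) : 0 < kdim k A ↥U := by
  rw [stmt19.kdim_sub]
  refine Nat.pos_of_ne_zero fun h0 => h ?_
  have := Submodule.finrank_eq_zero.mp h0
  exact (Submodule.restrictScalars_eq_bot_iff k A V).mp this

lemma stmt19.kdim_add_of_isCompl {U W : Submodule A V} (h : IsCompl U W) :
    kdim k A ↥U + kdim k A ↥W = kdim k A V := by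
  rw [stmt19.kdim_sub, stmt19.kdim_sub, stmt19.kdim_eq]
  exact Submodule.finrank_add_eq_of_isCompl (stmt19.rs_isCompl h)

lemma stmt19.kdim_sup_of_disjoint {X Y : Submodule A V} (h : Disjoint X Y) :
    kdim k A ↥(X ⊔ Y) = kdim k A ↥X + kdim k A ↥Y := by
  rw [stmt19.kdim_sub, stmt19.kdim_sub, stmt19.kdim_sub]
  have hsup : (X ⊔ Y).restrictScalars k = X.restrictScalars k ⊔ Y.restrictScalars k := by
    refine le_antisymm ?_ ?_
    · intro x hx
      obtain ⟨u, hu, w, hw, rfl⟩ := Submodule.mem_sup.mp hx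
      exact Submodule.add_mem_sup hu hw
    · refine sup_le ?_ ?_ <;> intro x hx
      · exact Submodule.mem_sup_left hx
      · exact Submodule.mem_sup_right hx
  rw [hsup]
  have key := Submodule.finrank_sup_add_finrank_inf_eq
    (X.restrictScalars k) (Y.restrictScalars k)
  rw [disjoint_iff.mp (stmt19.rs_disjoint h)] at key
  simpa using key

end Aux

section Indep

variable {A : Type} [Ring A] {V : Type} [AddCommGroup V] [Module A V]

lemma stmt19.indep_map {U : Submodule A V} {ι : Type} {P : ι → Submodule A ↥U}
    (h : iSupIndep P) : iSupIndep (fun i => (P i).map U.subtype) := by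
  intro i
  have hd : Disjoint (P i) (⨆ j ≠ i, P j) := h i
  have hmap : (⨆ j, ⨆ _ : j ≠ i, (P j).map U.subtype)
      = ((⨆ j, ⨆ _ : j ≠ i, P j)).map U.subtype := by
    rw [Submodule.map_iSup]
    exact iSup_congr fun j => (Submodule.map_iSup _ _).symm
  rw [disjoint_iff] at hd ⊢
  show (P i).map U.subtype ⊓ (⨆ j, ⨆ _ : j ≠ i, (P j).map U.subtype) = ⊥
  rw [hmap, ← Submodule.map_inf _ (Submodule.injective_subtype U), hd,
    Submodule.map_bot]

lemma stmt19.indep_sum {U W : Submodule A V} (hUW : Disjoint U W)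
    {ιU ιW : Type} {PU : ιU → Submodule A ↥U} {PW : ιW → Submodule A ↥W}
    (hU : iSupIndep PU) (hW : iSupIndep PW) :
    iSupIndep (Sum.elim (fun i => (PU i).map U.subtype)
      (fun j => (PW j).map W.subtype)) := by
  set QU : ιU → Submodule A V := fun i => (PU i).map U.subtype with hQU
  set QW : ιW → Submodule A V := fun j => (PW j).map W.subtype with hQW
  have hQUle : ∀ i, QU i ≤ U := fun i => Submodule.map_subtype_le U (PU i)
  have hQWle : ∀ j, QW j ≤ W := fun j => Submodule.map_subtype_le W (PW j)
  have hUind : iSupIndep QU := stmt19.indep_map hU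
  have hWind : iSupIndep QW := stmt19.indep_map hW
  intro x
  cases x with
  | inl i =>
    have h2 : (⨆ b, ⨆ _ : b ≠ Sum.inl i, Sum.elim QU QW b)
        ≤ (⨆ j, ⨆ _ : j ≠ i, QU j) ⊔ W := by
      refine iSup₂_le ?_
      rintro (j | j) hb
      · have hji : j ≠ i := fun h => hb (by rw [h])
        exact le_trans (le_iSup₂ (f := fun j (_ : j ≠ i) => QU j) j hji) le_sup_left
      · exact le_trans (hQWle j) le_sup_right
    refine Disjoint.mono_right h2 ?_
    refine Disjoint.disjoint_sup_right_of_disjoint_sup_left (hUind i) ?_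
    exact hUW.mono_left (sup_le (hQUle i) (iSup₂_le fun j _ => hQUle j))
  | inr j =>
    have h2 : (⨆ b, ⨆ _ : b ≠ Sum.inr j, Sum.elim QU QW b)
        ≤ (⨆ i, ⨆ _ : i ≠ j, QW i) ⊔ U := by
      refine iSup₂_le ?_
      rintro (i | i) hb
      · exact le_trans (hQUle i) le_sup_right
      · have hij : i ≠ j := fun h => hb (by rw [h])
        exact le_trans (le_iSup₂ (f := fun i (_ : i ≠ j) => QW i) i hij) le_sup_left
    refine Disjoint.mono_right h2 ?_
    refine Disjoint.disjoint_sup_right_of_disjoint_sup_left (hWind j) ?_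
    exact hUW.symm.mono_left (sup_le (hQWle j) (iSup₂_le fun i _ => hQWle i))

end Indep

section Main

variable {k A : Type} [Field k] [Ring A] [Algebra k A] [FiniteDimensional k A]

lemma stmt19.key (ε : ℝ) (L : ℕ)
    (hI : ∀ M : FDMod k A, Indec k A M →
      ∃ N : Submodule A M.carrier,
        (1 - ε) * (kdim k A M.carrier : ℝ) ≤ (kdim k A N : ℝ) ∧
        ∃ (t : ℕ) (P : Fin t → Submodule A M.carrier),
          (∀ i, P i ≤ N) ∧ iSup P = N ∧ iSupIndep P ∧ ∀ i, kdim k A (P i) ≤ L) :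
    ∀ n : ℕ, ∀ M : FDMod k A, kdim k A M.carrier ≤ n →
      ∃ (t : ℕ) (P : Fin t → Submodule A M.carrier),
        iSupIndep P ∧ (∀ i, kdim k A (P i) ≤ L) ∧
        (1 - ε) * (kdim k A M.carrier : ℝ) ≤ (kdim k A ↥(iSup P) : ℝ) := by
  intro n
  induction n with
  | zero =>
    intro M hM
    refine ⟨0, fun i => i.elim0, fun i => i.elim0, fun i => i.elim0, ?_⟩
    rw [Nat.le_zero.mp hM]
    simpa using Nat.cast_nonneg _
  | succ n IH =>
    intro M hM
    letI : Module k M.carrier := Module.compHom M.carrier (algebraMap k A)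
    haveI : IsScalarTower k A M.carrier :=
      IsScalarTower.of_algebraMap_smul fun r x => rfl
    haveI : Module.Finite k M.carrier := Module.Finite.trans A M.carrier
    by_cases h0 : ∀ x : M.carrier, x = 0
    · -- trivial module
      refine ⟨0, fun i => i.elim0, fun i => i.elim0, fun i => i.elim0, ?_⟩
      haveI : Subsingleton M.carrier := subsingleton_of_forall_eq 0 fun x => h0 x
      have : kdim k A M.carrier = 0 := by
        rw [stmt19.kdim_eq, Module.finrank_zero_of_subsingleton]
      rw [this]
      simpa using Nat.cast_nonneg _
    · by_cases hind : Indec k A M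
      · obtain ⟨N, hN, t, P, hPN, hPsup, hPind, hPdim⟩ := hI M hind
        exact ⟨t, P, hPind, hPdim, by rwa [hPsup]⟩
      · -- decomposable : get nontrivial complementary pair
        rw [Indec] at hind
        push_neg at hind
        push_neg at h0
        obtain ⟨U, W, hUW, hUbot, hWbot⟩ := hind h0
        haveI : IsNoetherianRing A := stmt19.noeth (k := k)
        have hadd : kdim k A ↥U + kdim k A ↥W = kdim k A M.carrier :=
          stmt19.kdim_add_of_isCompl hUW
        have hUpos : 0 < kdim k A ↥U := stmt19.kdim_pos hUbot
        have hWpos : 0 < kdim k A ↥W := stmt19.kdim_pos hWbot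
        set MU : FDMod k A := ⟨↥U⟩ with hMU
        set MW : FDMod k A := ⟨↥W⟩ with hMW
        have hUn : kdim k A ↥U ≤ n := by omega
        have hWn : kdim k A ↥W ≤ n := by omega
        obtain ⟨tU, PU, hPUind, hPUdim, hPUbound⟩ := IH MU hUn
        obtain ⟨tW, PW, hPWind, hPWdim, hPWbound⟩ := IH MW hWn
        set QU : Fin tU → Submodule A M.carrier := fun i => (PU i).map U.subtype with hQU
        set QW : Fin tW → Submodule A M.carrier := fun j => (PW j).map W.subtype with hQW
        set Q : Fin tU ⊕ Fin tW → Submodule A M.carrier := Sum.elim QU QW with hQ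
        have hQind : iSupIndep Q := stmt19.indep_sum hUW.disjoint hPUind hPWind
        set e : Fin (tU + tW) ≃ Fin tU ⊕ Fin tW := finSumFinEquiv.symm with he
        refine ⟨tU + tW, Q ∘ e, hQind.comp e.injective, ?_, ?_⟩
        · intro i
          rcases hei : e i with j | j
          · have h1 : kdim k A ↥((Q ∘ e) i) = kdim k A ↥(QU j) :=
              stmt19.kdim_eq_of_eq (by show Q (e i) = QU j; rw [hei]; rfl)
            have h2 : kdim k A ↥(QU j) = kdim k A ↥(PU j) :=
              (stmt19.kdim_congr (k := k)
                (Submodule.equivMapOfInjective _ (Submodule.injective_subtype U) (PU j))).symm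
            rw [h1, h2]; exact hPUdim j
          · have h1 : kdim k A ↥((Q ∘ e) i) = kdim k A ↥(QW j) :=
              stmt19.kdim_eq_of_eq (by show Q (e i) = QW j; rw [hei]; rfl)
            have h2 : kdim k A ↥(QW j) = kdim k A ↥(PW j) :=
              (stmt19.kdim_congr (k := k)
                (Submodule.equivMapOfInjective _ (Submodule.injective_subtype W) (PW j))).symm
            rw [h1, h2]; exact hPWdim j
        · have hsupe : iSup (Q ∘ e) = iSup Q := e.iSup_comp
          have hsupQ : iSup Q = (iSup PU).map U.subtype ⊔ (iSup PW).map W.subtype := by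
            rw [hQ, iSup_sum]
            simp only [Sum.elim_inl, Sum.elim_inr, hQU, hQW]
            rw [Submodule.map_iSup, Submodule.map_iSup]
          have hdisj : Disjoint ((iSup PU).map U.subtype) ((iSup PW).map W.subtype) :=
            hUW.disjoint.mono (Submodule.map_subtype_le U _) (Submodule.map_subtype_le W _)
          have hkd : kdim k A ↥(iSup (Q ∘ e))
              = kdim k A ↥(iSup PU) + kdim k A ↥(iSup PW) := by
            rw [stmt19.kdim_eq_of_eq (hsupe.trans hsupQ),
              stmt19.kdim_sup_of_disjoint hdisj]
            rw [← stmt19.kdim_congr (k := k)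
                (Submodule.equivMapOfInjective _ (Submodule.injective_subtype U) (iSup PU)),
              ← stmt19.kdim_congr (k := k)
                (Submodule.equivMapOfInjective _ (Submodule.injective_subtype W) (iSup PW))]
          rw [hkd, ← hadd]
          push_cast
          nlinarith [hPUbound, hPWbound]

end Main

/-- If the family of indecomposable finite dimensional `A`-modules is
hyperfinite, then the family of all finite dimensional `A`-modules is hyperfinite, i.e.
`A` is of amenable representation type. -/
theorem stmt19 {k A : Type} [Field k] [Ring A] [Algebra k A] [FiniteDimensional k A]
    (hInd : Hyperfinite k A {M : FDMod k A | Indec k A M}) :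
    Hyperfinite k A (Set.univ : Set (FDMod k A)) := by
  intro ε hε
  obtain ⟨L, hL, hI⟩ := hInd ε hε
  refine ⟨L, hL, fun M _ => ?_⟩
  obtain ⟨t, P, hPind, hPdim, hPbound⟩ :=
    stmt19.key ε L (fun M hM => hI M hM) (kdim k A M.carrier) M le_rfl
  exact ⟨iSup P, hPbound, t, P, fun i => le_iSup P i, rfl, hPind, hPdim⟩
end
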